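/- arXiv:2511.16517 — 7 statements merged into one kernel-verified Lean document; each statement's English description precedes it below -/
import Mathlib

section
/- The characteristic function can be recovered from the indirect function: for every coalition S ⊆ N, v(S) = min_{x∈ℝ^n} (π(x) + Σ_{k∈S} x_k), where π is the indirect function of the game (N,v). -/
/-- Indirect function of a TU game: `π(x) = max_{T ⊆ N} (v(T) - ∑_{k∈T} x k)`. -/
noncomputable def indirect {n : ℕ} (v : Finset (Fin n) → ℝ) (x : Fin n → ℝ) : ℝ :=
  Finset.univ.sup' ⟨∅, Finset.mem_univ ∅⟩ fun S => v S - ∑ k ∈ S, x k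

/-- The characteristic function is recovered from the indirect function:
`v(S) = min_{x ∈ ℝⁿ} (π(x) + ∑_{k∈S} x k)`, the minimum being attained. -/
theorem charFun_eq_min_indirect {n : ℕ} (v : Finset (Fin n) → ℝ) (hv : v ∅ = 0)
    (S : Finset (Fin n)) :
    IsLeast {r : ℝ | ∃ x : Fin n → ℝ, r = indirect v x + ∑ k ∈ S, x k} (v S) := by
  constructor
  · -- membership : the minimum is attained
    set B : ℝ := Finset.univ.sup' ⟨∅, Finset.mem_univ ∅⟩ (fun T => |v T|) with hBdef
    have hB : ∀ T : Finset (Fin n), |v T| ≤ B := fun T =>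
      Finset.le_sup' (fun T => |v T|) (Finset.mem_univ T)
    have hB0 : 0 ≤ B := le_trans (abs_nonneg _) (hB ∅)
    set m : ℝ := -(2*B + 1) with hm
    set M : ℝ := 2*B + (n:ℝ)*(2*B+1) + 1 with hM
    have hm0 : m ≤ 0 := by rw [hm]; linarith
    have hM0 : 0 ≤ M := by
      rw [hM]
      have : (0:ℝ) ≤ (n:ℝ) := Nat.cast_nonneg n
      nlinarith
    refine ⟨fun k => if k ∈ S then m else M, ?_⟩
    have hsumS : ∑ k ∈ S, (if k ∈ S then m else M) = S.card * m := by
      rw [Finset.sum_congr rfl (fun k hk => if_pos hk), Finset.sum_const, nsmul_eq_mul]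
    have key : indirect v (fun k => if k ∈ S then m else M) = v S - S.card * m := by
      apply le_antisymm
      · apply Finset.sup'_le
        intro T _
        have hsplit : ∑ k ∈ T, (if k ∈ S then m else M)
            = (T ∩ S).card * m + (T \ S).card * M := by
          have hfil1 : T.filter (· ∈ S) = T ∩ S := by
            ext k; simp [Finset.mem_filter, Finset.mem_inter]
          have hfil2 : T.filter (fun k => ¬ k ∈ S) = T \ S := by
            ext k; simp [Finset.mem_filter, Finset.mem_sdiff]
          rw [← Finset.sum_filter_add_sum_filter_not T (· ∈ S)]
          congr 1
          · rw [Finset.sum_congr rfl (fun k hk => if_pos (Finset.mem_filter.mp hk).2),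
              Finset.sum_const, nsmul_eq_mul, hfil1]
          · rw [Finset.sum_congr rfl (fun k hk => if_neg (Finset.mem_filter.mp hk).2),
              Finset.sum_const, nsmul_eq_mul, hfil2]
        show v T - ∑ k ∈ T, (if k ∈ S then m else M) ≤ v S - S.card * m
        rw [hsplit]
        have hvT := abs_le.mp (hB T)
        have hvS := abs_le.mp (hB S)
        by_cases hTS : T ⊆ S
        · have hTint : T ∩ S = T := Finset.inter_eq_left.mpr hTS
          have hTsd : T \ S = ∅ := Finset.sdiff_eq_empty_iff_subset.mpr hTS
          rw [hTint, hTsd]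
          simp only [Finset.card_empty, Nat.cast_zero, zero_mul, add_zero]
          rcases eq_or_lt_of_le (Finset.card_le_card hTS) with h | h
          · have hTeq : T = S := Finset.eq_of_subset_of_card_le hTS h.ge
            rw [hTeq]
          · have h1 : (1:ℝ) ≤ (S.card : ℝ) - T.card := by
              have hh : T.card + 1 ≤ S.card := h
              have : (T.card : ℝ) + 1 ≤ S.card := by exact_mod_cast hh
              linarith
            nlinarith
        · obtain ⟨k0, hk0T, hk0S⟩ := Finset.not_subset.mp hTS
          have h1 : (1:ℝ) ≤ ((T \ S).card : ℝ) := by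
            have hmem : k0 ∈ T \ S := Finset.mem_sdiff.mpr ⟨hk0T, hk0S⟩
            have hp := Finset.card_pos.mpr ⟨k0, hmem⟩
            exact_mod_cast hp
          have h2 : ((T ∩ S).card : ℝ) ≤ (n:ℝ) := by
            have := (Finset.card_le_univ (T ∩ S)).trans_eq (Finset.card_fin n)
            exact_mod_cast this
          have h3 : ((S.card : ℝ)) ≤ (n:ℝ) := by
            have := (Finset.card_le_univ S).trans_eq (Finset.card_fin n)
            exact_mod_cast this
          have hc1 : ((T \ S).card : ℝ) * M ≥ 1 * M :=
            mul_le_mul_of_nonneg_right h1 hM0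
          have hc2 : (n:ℝ) * m ≤ ((T ∩ S).card : ℝ) * m :=
            mul_le_mul_of_nonpos_right h2 hm0
          have hSc0 : (0:ℝ) ≤ (S.card : ℝ) := Nat.cast_nonneg _
          nlinarith [mul_nonneg hSc0 (by linarith : (0:ℝ) ≤ 2*B+1)]
      · have := Finset.le_sup' (fun T => v T - ∑ k ∈ T, (if k ∈ S then m else M))
          (Finset.mem_univ S)
        rw [hsumS] at this
        exact this
    show v S = _ + ∑ k ∈ S, (if k ∈ S then m else M)
    rw [key, hsumS]; ring
  · -- lower bound
    rintro r ⟨x, rfl⟩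
    have := Finset.le_sup' (fun T => v T - ∑ k ∈ T, x k) (Finset.mem_univ S)
    have h2 : v S - ∑ k ∈ S, x k ≤ indirect v x := this
    linarith
end

section
/- Let (N,v) be a TU game with indirect function π, and let x ∈ ℝ^n. For players i ≠ j define the transfer vector x^{i,j,δ} by subtracting δ from coordinate i and adding δ to coordinate j (other coordinates unchanged). If δ ≥ δ₁(x,v) := max over k ∈ N and S ⊆ N∖{k} of |v(S∪{k}) - v(S) - x_k|, then s_{ij}(x,v) = π(x^{i,j,δ}) - δ, where s_{ij}(x,v) = max_{S: i∈S, j∉S} (v(S) - x(S)). -/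
/-- Maximum surplus of player `i` over player `j` at `x`:
`s_{ij}(x,v) = max_{S : i ∈ S, j ∉ S} (v(S) - x(S))`. -/
noncomputable def surplus {n : ℕ} (v : Finset (Fin n) → ℝ) (x : Fin n → ℝ)
    (i j : Fin n) : ℝ :=
  sSup {r : ℝ | ∃ S : Finset (Fin n), i ∈ S ∧ j ∉ S ∧ r = v S - ∑ k ∈ S, x k}

/-- `δ₁(x,v) = max_{k ∈ N, S ⊆ N∖{k}} |v(S ∪ {k}) - v(S) - x k|`. -/
noncomputable def delta1 {n : ℕ} (v : Finset (Fin n) → ℝ) (x : Fin n → ℝ) : ℝ :=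
  sSup {r : ℝ | ∃ (k : Fin n) (S : Finset (Fin n)), k ∉ S ∧
    r = |v (insert k S) - v S - x k|}

/-- Transfer vector: subtract `δ` from coordinate `i`, add `δ` to coordinate `j`. -/
noncomputable def transfer {n : ℕ} (x : Fin n → ℝ) (i j : Fin n) (δ : ℝ) :
    Fin n → ℝ :=
  fun k => if k = i then x i - δ else if k = j then x j + δ else x k

/-- Lower bound on transfers: if `δ ≥ δ₁(x,v)` then
`s_{ij}(x,v) = π(x^{i,j,δ}) - δ`. -/
theorem surplus_eq_indirect_transfer {n : ℕ} (hn : 2 ≤ n)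
    (v : Finset (Fin n) → ℝ) (hv : v ∅ = 0) (x : Fin n → ℝ)
    (i j : Fin n) (hij : i ≠ j) (δ : ℝ) (hδ : delta1 v x ≤ δ) :
    surplus v x i j = indirect v (transfer x i j δ) - δ := by
  classical
  set f : Finset (Fin n) → ℝ := fun S => v S - ∑ k ∈ S, x k with hf
  set T : Finset (Finset (Fin n)) :=
    Finset.univ.filter (fun S => i ∈ S ∧ j ∉ S) with hT
  have hTne : T.Nonempty := ⟨{i}, by simp [hT, Ne.symm hij]⟩
  have hmemT : ∀ S : Finset (Fin n), S ∈ T ↔ i ∈ S ∧ j ∉ S := by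
    intro S; simp [hT]
  -- key inequality
  have key : ∀ (k : Fin n) (S : Finset (Fin n)), k ∉ S →
      |v (insert k S) - v S - x k| ≤ δ := by
    intro k S hk
    have hmem : |v (insert k S) - v S - x k| ∈
        {r : ℝ | ∃ (k : Fin n) (S : Finset (Fin n)), k ∉ S ∧
          r = |v (insert k S) - v S - x k|} := ⟨k, S, hk, rfl⟩
    refine le_trans (le_csSup ?_ hmem) hδ
    refine Set.Finite.bddAbove (Set.Finite.subset
      (Set.finite_range (fun p : Fin n × Finset (Fin n) =>
        |v (insert p.1 p.2) - v p.2 - x p.1|)) ?_)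
    rintro r ⟨k', S', _, rfl⟩
    exact ⟨(k', S'), rfl⟩
  -- surplus as finite sup
  have hset : {r : ℝ | ∃ S : Finset (Fin n), i ∈ S ∧ j ∉ S ∧ r = v S - ∑ k ∈ S, x k}
      = f '' ↑T := by
    ext r
    constructor
    · rintro ⟨S, hi, hj, rfl⟩
      exact ⟨S, by simp [hT, hi, hj], rfl⟩
    · rintro ⟨S, hS, rfl⟩
      rw [Finset.mem_coe, hmemT] at hS
      exact ⟨S, hS.1, hS.2, rfl⟩
  have hsurp : surplus v x i j = T.sup' hTne f := by
    unfold surplus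
    rw [hset]
    exact (Finset.sup'_eq_csSup_image T hTne f).symm
  -- sum of transfer
  have hsum : ∀ S : Finset (Fin n),
      (∑ k ∈ S, transfer x i j δ k)
        = (∑ k ∈ S, x k) + (if i ∈ S then -δ else 0) + (if j ∈ S then δ else 0) := by
    intro S
    have hy : ∀ k, transfer x i j δ k
        = x k + (if k = i then -δ else 0) + (if k = j then δ else 0) := by
      intro k
      unfold transfer
      split_ifs <;> subst_vars <;> first | ring1 | exact (hij rfl).elim
    simp only [hy, Finset.sum_add_distrib, Finset.sum_ite_eq']
  set M : ℝ := T.sup' hTne f with hM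
  have hg : ∀ S : Finset (Fin n), v S - ∑ k ∈ S, transfer x i j δ k
      = f S - (if i ∈ S then -δ else 0) - (if j ∈ S then δ else 0) := by
    intro S; rw [hsum]; simp [hf]; ring
  have hind : indirect v (transfer x i j δ) = M + δ := by
    unfold indirect
    apply le_antisymm
    · apply Finset.sup'_le
      intro S _
      rw [hg]
      by_cases hi : i ∈ S <;> by_cases hj : j ∈ S
      · -- i ∈ S, j ∈ S : f S ≤ f (S.erase j) + δ
        have hjE : j ∉ S.erase j := Finset.notMem_erase j S
        have hins : insert j (S.erase j) = S := Finset.insert_erase hj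
        have hk := key j (S.erase j) hjE
        rw [hins] at hk
        have hx : ∑ k ∈ S, x k = x j + ∑ k ∈ S.erase j, x k :=
          (Finset.add_sum_erase S x hj).symm
        have h1 : f S ≤ f (S.erase j) + δ := by
          have := (abs_le.mp hk).2
          simp only [hf]
          rw [hx]; linarith
        have h2 : f (S.erase j) ≤ M :=
          Finset.le_sup' f ((hmemT _).mpr ⟨Finset.mem_erase.mpr ⟨hij, hi⟩, hjE⟩)
        simp [hi, hj]; linarith
      · -- i ∈ S, j ∉ S
        have h2 : f S ≤ M := Finset.le_sup' f ((hmemT _).mpr ⟨hi, hj⟩)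
        simp [hi, hj]; linarith
      · -- i ∉ S, j ∈ S : two steps
        set S1 := S.erase j with hS1
        have hjE : j ∉ S1 := Finset.notMem_erase j S
        have hins : insert j S1 = S := Finset.insert_erase hj
        have hk := key j S1 hjE
        rw [hins] at hk
        have hx : ∑ k ∈ S, x k = x j + ∑ k ∈ S1, x k :=
          (Finset.add_sum_erase S x hj).symm
        have h1 : f S ≤ f S1 + δ := by
          have := (abs_le.mp hk).2
          simp only [hf]
          rw [hx]; linarith
        have hiS1 : i ∉ S1 := fun h => hi (Finset.mem_of_mem_erase h)
        have hk2 := key i S1 hiS1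
        have hx2 : ∑ k ∈ insert i S1, x k = x i + ∑ k ∈ S1, x k :=
          Finset.sum_insert hiS1
        have h3 : f S1 ≤ f (insert i S1) + δ := by
          have := (abs_le.mp hk2).1
          simp only [hf]
          rw [hx2]; linarith
        have hjI : j ∉ insert i S1 := by
          simp [Finset.mem_insert, Ne.symm hij, hjE]
        have h4 : f (insert i S1) ≤ M :=
          Finset.le_sup' f ((hmemT _).mpr ⟨Finset.mem_insert_self i S1, hjI⟩)
        simp [hi, hj]; linarith
      · -- i ∉ S, j ∉ S : f S ≤ f (insert i S) + δ
        have hk2 := key i S hi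
        have hx2 : ∑ k ∈ insert i S, x k = x i + ∑ k ∈ S, x k :=
          Finset.sum_insert hi
        have h3 : f S ≤ f (insert i S) + δ := by
          have := (abs_le.mp hk2).1
          simp only [hf]
          rw [hx2]; linarith
        have hjI : j ∉ insert i S := by
          simp [Finset.mem_insert, Ne.symm hij, hj]
        have h4 : f (insert i S) ≤ M :=
          Finset.le_sup' f ((hmemT _).mpr ⟨Finset.mem_insert_self i S, hjI⟩)
        simp [hi, hj]; linarith
    · have : M ≤ (Finset.univ.sup' ⟨∅, Finset.mem_univ ∅⟩
          fun S => v S - ∑ k ∈ S, transfer x i j δ k) - δ := by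
        apply Finset.sup'_le
        intro S hS
        rw [hmemT] at hS
        have h1 : v S - ∑ k ∈ S, transfer x i j δ k = f S + δ := by
          rw [hg]; simp [hS.1, hS.2]
        have h2 := Finset.le_sup' (fun S => v S - ∑ k ∈ S, transfer x i j δ k)
          (Finset.mem_univ S)
        rw [h1] at h2
        linarith
      linarith
  rw [hsurp, hind]; ring
end

section
/- A pre-imputation x (i.e., x(N) = v(N)) is in the pre-kernel of (N,v) if and only if for every pair i < j in N and some (equivalently any) δ ≥ δ₁(x,v), π(x^{i,j,δ}) = π(x^{j,i,δ}), where π is the indirect function. -/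
/-- Pre-kernel of a TU game. -/
def preKernel {n : ℕ} (v : Finset (Fin n) → ℝ) : Set (Fin n → ℝ) :=
  {x | (∑ k, x k) = v Finset.univ ∧
    ∀ i j : Fin n, i ≠ j → surplus v x i j = surplus v x j i}

/-!
Write `e(S) = v(S) - x(S)` for the excess of `S` at `x`. Since `e(S ∪ {k}) - e(S)` is exactly
`v(S ∪ {k}) - v(S) - x_k`, a `δ ≥ δ₁(x,v)` bounds how much the excess can change when one player
joins or leaves a coalition. Moving `S` to `T = (S ∖ {j}) ∪ {i}` therefore loses at most
`δ` per player moved, which is exactly what the transfer `x^{i,j,δ}` adds back; so every excess at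
`x^{i,j,δ}` is at most `e(T) + δ ≤ s_{ij}(x) + δ`, with equality at a maximizer of `s_{ij}`.
Thus `π(x^{i,j,δ}) = s_{ij}(x,v) + δ`, and the condition of the theorem is `s_{ij} = s_{ji}`.
-/

namespace PreKernel

variable {n : ℕ} (v : Finset (Fin n) → ℝ) (x : Fin n → ℝ)

def excess (S : Finset (Fin n)) : ℝ :=
  v S - ∑ k ∈ S, x k

variable {v x}

theorem abs_marginal_sub_le_delta1 {k : Fin n} {S : Finset (Fin n)} (hk : k ∉ S) :
    |v (insert k S) - v S - x k| ≤ delta1 v x := by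
  have hfin : {r : ℝ | ∃ (k : Fin n) (S : Finset (Fin n)), k ∉ S ∧
      r = |v (insert k S) - v S - x k|}.Finite :=
    (Set.finite_range fun p : Fin n × Finset (Fin n) => |v (insert p.1 p.2) - v p.2 - x p.1|).subset
      fun _ ⟨k, S, _, hr⟩ => ⟨(k, S), hr.symm⟩
  exact le_csSup hfin.bddAbove ⟨k, S, hk, rfl⟩

theorem excess_le_excess_insert_add {δ : ℝ} (hδ : delta1 v x ≤ δ) (S : Finset (Fin n))
    (k : Fin n) :
    excess v x S ≤ excess v x (insert k S) + if k ∈ S then 0 else δ := by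
  by_cases hk : k ∈ S
  · simp [hk]
  · have := (abs_le.1 ((abs_marginal_sub_le_delta1 hk).trans hδ)).1
    simp only [excess, hk, Finset.sum_insert, not_false_eq_true, if_false]
    linarith

theorem excess_le_excess_erase_add {δ : ℝ} (hδ : delta1 v x ≤ δ) (S : Finset (Fin n))
    (k : Fin n) :
    excess v x S ≤ excess v x (S.erase k) + if k ∈ S then δ else 0 := by
  by_cases hk : k ∈ S
  · have := (abs_le.1 ((abs_marginal_sub_le_delta1 (Finset.notMem_erase k S)).trans hδ)).2
    rw [Finset.insert_erase hk] at this
    simp only [excess, hk, if_true, ← Finset.sum_erase_add S x hk]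
    linarith
  · simp [hk]

theorem transfer_eq_add_single_sub_single {i j : Fin n} (hij : i ≠ j) (δ : ℝ) :
    transfer x i j δ = x + Pi.single j δ - Pi.single i δ := by
  ext k
  unfold transfer
  split_ifs with hki hkj <;> simp [*]

theorem excess_transfer {i j : Fin n} (hij : i ≠ j) (δ : ℝ) (S : Finset (Fin n)) :
    excess v (transfer x i j δ) S
      = excess v x S + (if i ∈ S then δ else 0) - if j ∈ S then δ else 0 := by
  simp only [excess, transfer_eq_add_single_sub_single hij, Pi.add_apply, Pi.sub_apply,
    Finset.sum_sub_distrib, Finset.sum_add_distrib, Finset.sum_pi_single']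
  ring

theorem surplus_set_finite (i j : Fin n) :
    {r : ℝ | ∃ S : Finset (Fin n), i ∈ S ∧ j ∉ S ∧ r = v S - ∑ k ∈ S, x k}.Finite :=
  (Set.finite_range (excess v x)).subset fun _ ⟨S, _, _, hr⟩ => ⟨S, hr.symm⟩

theorem excess_le_surplus {i j : Fin n} {S : Finset (Fin n)} (hi : i ∈ S) (hj : j ∉ S) :
    excess v x S ≤ surplus v x i j :=
  le_csSup (surplus_set_finite i j).bddAbove ⟨S, hi, hj, rfl⟩

theorem exists_excess_eq_surplus {i j : Fin n} (hij : i ≠ j) :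
    ∃ S : Finset (Fin n), i ∈ S ∧ j ∉ S ∧ surplus v x i j = excess v x S :=
  Set.Nonempty.csSup_mem (s := {r : ℝ | ∃ S : Finset (Fin n), i ∈ S ∧ j ∉ S ∧
    r = v S - ∑ k ∈ S, x k}) ⟨_, {i}, Finset.mem_singleton_self i,
    Finset.notMem_singleton.2 hij.symm, rfl⟩ (surplus_set_finite i j)

theorem indirect_transfer {i j : Fin n} (hij : i ≠ j) {δ : ℝ} (hδ : delta1 v x ≤ δ) :
    indirect v (transfer x i j δ) = surplus v x i j + δ := by
  apply le_antisymm
  · refine Finset.sup'_le _ _ fun S _ => ?_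
    have hiT : i ∈ insert i (S.erase j) := Finset.mem_insert_self i _
    have hjT : j ∉ insert i (S.erase j) := by simp [hij.symm]
    have hiS : i ∈ S.erase j ↔ i ∈ S := by simp [hij]
    have h_erase := excess_le_excess_erase_add hδ S j
    have h_insert := excess_le_excess_insert_add hδ (S.erase j) i
    have h_surplus := excess_le_surplus (v := v) (x := x) hiT hjT
    change excess v (transfer x i j δ) S ≤ _
    rw [excess_transfer hij]
    simp only [hiS] at h_insert
    split_ifs at h_erase h_insert ⊢ <;> linarith
  · obtain ⟨S, hi, hj, hS⟩ := exists_excess_eq_surplus (v := v) (x := x) hij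
    calc surplus v x i j + δ = excess v (transfer x i j δ) S := by
          simp [excess_transfer hij, hi, hj, hS]
      _ ≤ indirect v (transfer x i j δ) := Finset.le_sup' (excess v _) (Finset.mem_univ S)

theorem indirect_transfer_eq_iff {i j : Fin n} (hij : i ≠ j) {δ : ℝ} (hδ : delta1 v x ≤ δ) :
    indirect v (transfer x i j δ) = indirect v (transfer x j i δ) ↔
      surplus v x i j = surplus v x j i := by
  rw [indirect_transfer hij hδ, indirect_transfer hij.symm hδ, add_left_inj]

end PreKernel

open PreKernel

theorem preKernel_iff_indirect_general {n : ℕ} (v : Finset (Fin n) → ℝ)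
    (x : Fin n → ℝ) (hx : (∑ k, x k) = v Finset.univ) :
    x ∈ preKernel v ↔
      ∀ i j : Fin n, i < j → ∀ δ : ℝ, delta1 v x ≤ δ →
        indirect v (transfer x i j δ) = indirect v (transfer x j i δ) := by
  constructor
  · rintro ⟨-, h_surplus⟩ i j hij δ hδ
    exact (indirect_transfer_eq_iff hij.ne hδ).2 (h_surplus i j hij.ne)
  · intro h_indirect
    have h_lt : ∀ i j : Fin n, i < j → surplus v x i j = surplus v x j i := fun i j hij =>
      (indirect_transfer_eq_iff hij.ne le_rfl).1 (h_indirect i j hij _ le_rfl)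
    refine ⟨hx, fun i j hij => ?_⟩
    rcases hij.lt_or_gt with hij | hji
    · exact h_lt i j hij
    · exact (h_lt j i hji).symm

/-- The indirect function characterizes the pre-kernel: a pre-imputation `x` lies in
the pre-kernel iff for every pair `i < j` and any `δ ≥ δ₁(x,v)`,
`π(x^{i,j,δ}) = π(x^{j,i,δ})`. -/
theorem preKernel_iff_indirect {n : ℕ} (v : Finset (Fin n) → ℝ) (hv : v ∅ = 0)
    (x : Fin n → ℝ) (hx : (∑ k, x k) = v Finset.univ) :
    x ∈ preKernel v ↔
      ∀ i j : Fin n, i < j → ∀ δ : ℝ, delta1 v x ≤ δ →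
        indirect v (transfer x i j δ) = indirect v (transfer x j i δ) :=
  preKernel_iff_indirect_general v x hx
end

section
/- If (N,v) is a convex game and x is a core allocation, then for every nonempty S ⊆ N the Davis/Maschler reduced game (S, v_{S,x}) is convex, where v_{S,x}(T) = 0 if T=∅, v(N) - x(N∖S) if T=S, and max_{Q ⊆ N∖S}(v(T∪Q) - x(Q)) otherwise. -/
/-- Core of a TU game. -/
def core {n : ℕ} (v : Finset (Fin n) → ℝ) : Set (Fin n → ℝ) :=
  {x | (∑ k, x k) = v Finset.univ ∧ ∀ T : Finset (Fin n), v T ≤ ∑ k ∈ T, x k}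

/-- Davis/Maschler reduced game of `(N,v)` w.r.t. coalition `S` and allocation `x`. -/
noncomputable def reducedGame {n : ℕ} (v : Finset (Fin n) → ℝ)
    (S : Finset (Fin n)) (x : Fin n → ℝ) (T : Finset (Fin n)) : ℝ :=
  if T = ∅ then 0
  else if T = S then v Finset.univ - ∑ k ∈ Finset.univ \ S, x k
  else sSup {r : ℝ | ∃ Q : Finset (Fin n), Q ⊆ Finset.univ \ S ∧
    r = v (T ∪ Q) - ∑ k ∈ Q, x k}

/-- If `(N,v)` is convex and `x` is a core allocation, then every Davis/Maschler
reduced game `(S, v_{S,x})` is convex. -/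
theorem reducedGame_convex {n : ℕ} (v : Finset (Fin n) → ℝ) (hv : v ∅ = 0)
    (hconv : ∀ A B : Finset (Fin n), v A + v B ≤ v (A ∪ B) + v (A ∩ B))
    (x : Fin n → ℝ) (hx : x ∈ core v)
    (S : Finset (Fin n)) (hS : S.Nonempty) :
    ∀ A B : Finset (Fin n), A ⊆ S → B ⊆ S →
      reducedGame v S x A + reducedGame v S x B ≤
        reducedGame v S x (A ∪ B) + reducedGame v S x (A ∩ B) := by
  obtain ⟨hxN, hxcore⟩ := hx
  set E : Finset (Fin n) → Set ℝ := fun T =>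
    {r : ℝ | ∃ Q : Finset (Fin n), Q ⊆ Finset.univ \ S ∧
      r = v (T ∪ Q) - ∑ k ∈ Q, x k} with hE
  have hfin : ∀ T, (E T).Finite := by
    intro T
    have hsub : E T ⊆ (fun Q : Finset (Fin n) => v (T ∪ Q) - ∑ k ∈ Q, x k) '' Set.univ := by
      rintro r ⟨Q, hQ, rfl⟩; exact ⟨Q, trivial, rfl⟩
    exact (Set.finite_univ.image _).subset hsub
  have hne : ∀ T, (E T).Nonempty := by
    intro T
    exact ⟨v (T ∪ ∅) - ∑ k ∈ (∅ : Finset (Fin n)), x k, ∅, by simp, rfl⟩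
  have hub : ∀ T (Q : Finset (Fin n)), Q ⊆ Finset.univ \ S →
      v (T ∪ Q) - ∑ k ∈ Q, x k ≤ sSup (E T) := by
    intro T Q hQ
    exact le_csSup (hfin T).bddAbove ⟨Q, hQ, rfl⟩
  have hmem : ∀ T, ∃ Q : Finset (Fin n), Q ⊆ Finset.univ \ S ∧
      sSup (E T) = v (T ∪ Q) - ∑ k ∈ Q, x k := by
    intro T
    exact (hne T).csSup_mem (hfin T)
  -- disjointness of subsets of S and subsets of univ \ S
  have hdisj : ∀ P Q : Finset (Fin n), P ⊆ S → Q ⊆ Finset.univ \ S → Disjoint P Q := by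
    intro P Q hP hQ
    exact Finset.sdiff_disjoint.symm.mono hP hQ
  -- g ∅ = 0
  have hg0 : sSup (E ∅) = 0 := by
    apply le_antisymm
    · apply csSup_le (hne ∅)
      rintro r ⟨Q, hQ, rfl⟩
      have := hxcore Q
      simp only [Finset.empty_union]
      linarith
    · have := hub ∅ ∅ (by simp)
      simpa [hv] using this
  -- g S = v(N) - x(N \ S)
  have hgS : sSup (E S) = v Finset.univ - ∑ k ∈ Finset.univ \ S, x k := by
    apply le_antisymm
    · apply csSup_le (hne S)
      rintro r ⟨Q, hQ, rfl⟩
      have h1 : v (S ∪ Q) ≤ ∑ k ∈ S ∪ Q, x k := hxcore (S ∪ Q)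
      have h2 : ∑ k ∈ S ∪ Q, x k = ∑ k ∈ S, x k + ∑ k ∈ Q, x k :=
        Finset.sum_union (hdisj S Q subset_rfl hQ)
      have h3 : ∑ k ∈ Finset.univ \ S, x k + ∑ k ∈ S, x k = ∑ k ∈ Finset.univ, x k :=
        Finset.sum_sdiff (Finset.subset_univ S)
      have h4 : (∑ k ∈ Finset.univ, x k) = v Finset.univ := hxN
      linarith
    · have := hub S (Finset.univ \ S) subset_rfl
      have hcup : S ∪ (Finset.univ \ S) = Finset.univ := by
        rw [Finset.union_sdiff_of_subset (Finset.subset_univ S)]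
      rwa [hcup] at this
  -- reducedGame equals the sup everywhere on subsets of S
  have key : ∀ T : Finset (Fin n), reducedGame v S x T = sSup (E T) := by
    intro T
    unfold reducedGame
    by_cases h0 : T = ∅
    · rw [if_pos h0, h0, hg0]
    · rw [if_neg h0]
      by_cases hTS : T = S
      · rw [if_pos hTS, hTS, hgS]
      · rw [if_neg hTS]
  intro A B hA hB
  rw [key A, key B, key (A ∪ B), key (A ∩ B)]
  obtain ⟨QA, hQA, hgA⟩ := hmem A
  obtain ⟨QB, hQB, hgB⟩ := hmem B
  have hQU : QA ∪ QB ⊆ Finset.univ \ S := Finset.union_subset hQA hQB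
  have hQI : QA ∩ QB ⊆ Finset.univ \ S := fun a ha => hQA (Finset.mem_inter.mp ha).1
  -- set identities
  have hAQB : Disjoint A QB := hdisj A QB hA hQB
  have hBQA : Disjoint B QA := hdisj B QA hB hQA
  have hu : (A ∪ QA) ∪ (B ∪ QB) = (A ∪ B) ∪ (QA ∪ QB) := by
    ext a; simp only [Finset.mem_union]; tauto
  have hi : (A ∪ QA) ∩ (B ∪ QB) = (A ∩ B) ∪ (QA ∩ QB) := by
    have h1 : ∀ a, a ∈ A → a ∉ QB := fun a ha => Finset.disjoint_left.mp hAQB ha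
    have h2 : ∀ a, a ∈ B → a ∉ QA := fun a ha => Finset.disjoint_left.mp hBQA ha
    ext a
    simp only [Finset.mem_union, Finset.mem_inter]
    constructor
    · rintro ⟨h | h, h' | h'⟩
      · exact Or.inl ⟨h, h'⟩
      · exact absurd h' (h1 a h)
      · exact absurd h (h2 a h')
      · exact Or.inr ⟨h, h'⟩
    · rintro (⟨h, h'⟩ | ⟨h, h'⟩)
      · exact ⟨Or.inl h, Or.inl h'⟩
      · exact ⟨Or.inr h, Or.inr h'⟩
  have hsum : ∑ k ∈ QA, x k + ∑ k ∈ QB, x k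
      = ∑ k ∈ QA ∪ QB, x k + ∑ k ∈ QA ∩ QB, x k :=
    (Finset.sum_union_inter).symm
  have hc := hconv (A ∪ QA) (B ∪ QB)
  rw [hu, hi] at hc
  have hU := hub (A ∪ B) (QA ∪ QB) hQU
  have hI := hub (A ∩ B) (QA ∩ QB) hQI
  linarith
end

section
/- The core satisfies the Davis/Maschler reduced game property: if x is in the core of (N,v) and ∅ ≠ S ⊆ N, then the restriction x_S is in the core of the reduced game (S, v_{S,x}). -/
/-- The core satisfies the Davis/Maschler reduced game property: the restriction
`x_S` of a core allocation is in the core of the reduced game `(S, v_{S,x})`. -/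
theorem core_reducedGameProperty {n : ℕ} (v : Finset (Fin n) → ℝ) (hv : v ∅ = 0)
    (x : Fin n → ℝ) (hx : x ∈ core v) (S : Finset (Fin n)) (hS : S.Nonempty) :
    (∑ k ∈ S, x k) = reducedGame v S x S ∧
      ∀ T : Finset (Fin n), T ⊆ S → reducedGame v S x T ≤ ∑ k ∈ T, x k := by
  obtain ⟨heff, hcoal⟩ := hx
  have hSne : S ≠ ∅ := Finset.nonempty_iff_ne_empty.mp hS
  have hsplit : (∑ k ∈ S, x k) + (∑ k ∈ Finset.univ \ S, x k) = v Finset.univ := by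
    rw [add_comm, Finset.sum_sdiff (Finset.subset_univ S)]
    exact heff
  constructor
  · rw [reducedGame, if_neg hSne, if_pos rfl]
    linarith
  · intro T hTS
    by_cases hT : T = ∅
    · simp [reducedGame, hT]
    · by_cases hTS' : T = S
      · rw [reducedGame, if_neg hT, if_pos hTS', hTS']
        linarith
      · rw [reducedGame, if_neg hT, if_neg hTS']
        apply csSup_le
        · exact ⟨v T, ∅, by simp⟩
        · rintro r ⟨Q, hQ, rfl⟩
          have hdisj : Disjoint T Q := by
            refine Finset.disjoint_left.mpr fun a haT haQ => ?_
            exact (Finset.mem_sdiff.mp (hQ haQ)).2 (hTS haT)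
          have := hcoal (T ∪ Q)
          rw [Finset.sum_union hdisj] at this
          linarith
end

section
/- The pre-kernel satisfies the Davis/Maschler reduced game property: if x is in the pre-kernel of (N,v) and ∅ ≠ S ⊆ N with |S| ≥ 2, then x_S is in the pre-kernel of the reduced game (S, v_{S,x}). -/
/-- Maximum surplus of `i` over `j` within the reduced game on player set `S`. -/
noncomputable def reducedSurplus {n : ℕ} (v : Finset (Fin n) → ℝ)
    (S : Finset (Fin n)) (x : Fin n → ℝ) (i j : Fin n) : ℝ :=
  sSup {r : ℝ | ∃ T : Finset (Fin n), T ⊆ S ∧ i ∈ T ∧ j ∉ T ∧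
    r = reducedGame v S x T - ∑ k ∈ T, x k}

lemma finite_of_range' {α : Type*} [Fintype α] (f : α → ℝ) {s : Set ℝ}
    (h : ∀ r ∈ s, ∃ a, r = f a) : s.Finite :=
  (Set.finite_range f).subset (fun r hr => (h r hr).imp fun _ ha => ha.symm)

lemma reducedSurplus_eq_surplus {n : ℕ} (v : Finset (Fin n) → ℝ)
    (S : Finset (Fin n)) (x : Fin n → ℝ) (i j : Fin n)
    (hi : i ∈ S) (hj : j ∈ S) (hij : i ≠ j) :
    reducedSurplus v S x i j = surplus v x i j := by
  set A : Set ℝ := {r : ℝ | ∃ T : Finset (Fin n), T ⊆ S ∧ i ∈ T ∧ j ∉ T ∧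
    r = reducedGame v S x T - ∑ k ∈ T, x k} with hA
  set B : Set ℝ := {r : ℝ | ∃ R : Finset (Fin n), i ∈ R ∧ j ∉ R ∧
    r = v R - ∑ k ∈ R, x k} with hB
  have hAfin : A.Finite := finite_of_range'
    (fun T => reducedGame v S x T - ∑ k ∈ T, x k)
    (by rintro r ⟨T, _, _, _, rfl⟩; exact ⟨T, rfl⟩)
  have hBfin : B.Finite := finite_of_range'
    (fun R => v R - ∑ k ∈ R, x k)
    (by rintro r ⟨R, _, _, rfl⟩; exact ⟨R, rfl⟩)
  have hAne : A.Nonempty :=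
    ⟨_, {i}, Finset.singleton_subset_iff.mpr hi, Finset.mem_singleton_self i,
      by simp [hij.symm], rfl⟩
  have hBne : B.Nonempty :=
    ⟨_, {i}, Finset.mem_singleton_self i, by simp [hij.symm], rfl⟩
  -- inner set facts
  have hC : ∀ T : Finset (Fin n), T ⊆ S → i ∈ T → j ∉ T →
      reducedGame v S x T = sSup {r : ℝ | ∃ Q : Finset (Fin n),
        Q ⊆ Finset.univ \ S ∧ r = v (T ∪ Q) - ∑ k ∈ Q, x k} := by
    intro T hTS hiT hjT
    have hTne : T ≠ ∅ := Finset.ne_empty_of_mem hiT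
    have hTS' : T ≠ S := fun h => hjT (h ▸ hj)
    simp [reducedGame, hTne, hTS']
  have hCfin : ∀ T : Finset (Fin n), ({r : ℝ | ∃ Q : Finset (Fin n),
      Q ⊆ Finset.univ \ S ∧ r = v (T ∪ Q) - ∑ k ∈ Q, x k}).Finite := by
    intro T
    exact finite_of_range' (fun Q => v (T ∪ Q) - ∑ k ∈ Q, x k)
      (by rintro r ⟨Q, _, rfl⟩; exact ⟨Q, rfl⟩)
  have hCne : ∀ T : Finset (Fin n), ({r : ℝ | ∃ Q : Finset (Fin n),
      Q ⊆ Finset.univ \ S ∧ r = v (T ∪ Q) - ∑ k ∈ Q, x k}).Nonempty := by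
    intro T
    exact ⟨v (T ∪ ∅) - ∑ k ∈ (∅ : Finset (Fin n)), x k, ∅, Finset.empty_subset _, rfl⟩
  rw [reducedSurplus, surplus, ← hA, ← hB]
  apply le_antisymm
  · apply csSup_le hAne
    rintro r ⟨T, hTS, hiT, hjT, rfl⟩
    rw [hC T hTS hiT hjT]
    obtain ⟨Q, hQ, hval⟩ := (hCne T).csSup_mem (hCfin T)
    rw [hval]
    apply le_csSup hBfin.bddAbove
    refine ⟨T ∪ Q, Finset.mem_union_left _ hiT, ?_, ?_⟩
    · intro hjTQ
      rcases Finset.mem_union.mp hjTQ with h | h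
      · exact hjT h
      · exact (Finset.mem_sdiff.mp (hQ h)).2 hj
    · have hdisj : Disjoint T Q := by
        rw [Finset.disjoint_left]
        intro a haT haQ
        exact (Finset.mem_sdiff.mp (hQ haQ)).2 (hTS haT)
      rw [Finset.sum_union hdisj]
      ring
  · apply csSup_le hBne
    rintro r ⟨R, hiR, hjR, rfl⟩
    set T : Finset (Fin n) := R ∩ S with hT
    set Q : Finset (Fin n) := R \ S with hQdef
    have hTS : T ⊆ S := Finset.inter_subset_right
    have hiT : i ∈ T := Finset.mem_inter.mpr ⟨hiR, hi⟩
    have hjT : j ∉ T := fun h => hjR (Finset.mem_inter.mp h).1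
    have hQ : Q ⊆ Finset.univ \ S := by
      intro a ha
      exact Finset.mem_sdiff.mpr ⟨Finset.mem_univ a, (Finset.mem_sdiff.mp ha).2⟩
    have hTQR : T ∪ Q = R := by
      ext a; simp [hT, hQdef, and_or_left]; tauto
    have hsum : ∑ k ∈ T, x k + ∑ k ∈ Q, x k = ∑ k ∈ R, x k := by
      have hdisj : Disjoint T Q := by
        rw [Finset.disjoint_left]
        intro a haT haQ
        exact (Finset.mem_sdiff.mp haQ).2 (Finset.mem_inter.mp haT).2
      rw [← Finset.sum_union hdisj, hTQR]
    have h1 : v R - ∑ k ∈ R, x k ≤ reducedGame v S x T - ∑ k ∈ T, x k := by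
      rw [hC T hTS hiT hjT]
      have : v (T ∪ Q) - ∑ k ∈ Q, x k ≤ sSup {r : ℝ | ∃ Q' : Finset (Fin n),
          Q' ⊆ Finset.univ \ S ∧ r = v (T ∪ Q') - ∑ k ∈ Q', x k} :=
        le_csSup (hCfin T).bddAbove ⟨Q, hQ, rfl⟩
      rw [hTQR] at this
      linarith
    refine h1.trans (le_csSup hAfin.bddAbove ⟨T, hTS, hiT, hjT, rfl⟩)

/-- The pre-kernel satisfies the Davis/Maschler reduced game property: the restriction
of `x ∈ PK(v)` to `S` (with `|S| ≥ 2`) is efficient in the reduced game and balances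
all maximum surpluses there, i.e. it lies in the pre-kernel of `(S, v_{S,x})`. -/
theorem preKernel_reducedGameProperty {n : ℕ} (v : Finset (Fin n) → ℝ)
    (hv : v ∅ = 0) (x : Fin n → ℝ) (hx : x ∈ preKernel v)
    (S : Finset (Fin n)) (hS : 2 ≤ S.card) :
    (∑ k ∈ S, x k) = reducedGame v S x S ∧
      ∀ i j : Fin n, i ∈ S → j ∈ S → i ≠ j →
        reducedSurplus v S x i j = reducedSurplus v S x j i := by
  obtain ⟨heff, hbal⟩ := hx
  constructor
  · have hSne : S ≠ ∅ := by
      intro h; rw [h] at hS; simp at hS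
    have hsplit : ∑ k ∈ Finset.univ \ S, x k + ∑ k ∈ S, x k = ∑ k, x k :=
      Finset.sum_sdiff (Finset.subset_univ S)
    simp only [reducedGame, hSne, if_false, if_true, if_neg hSne, if_pos rfl]
    linarith [heff]
  · intro i j hi hj hij
    rw [reducedSurplus_eq_surplus v S x i j hi hj hij,
        reducedSurplus_eq_surplus v S x j i hj hi hij.symm]
    exact hbal i j hij
end

section
/- For any TU game (N,v), the pre-nucleolus point (assumed to exist as the lexicographic minimizer of the ordered excess vector over pre-imputations) is unique: if x and y are both pre-imputations whose nonincreasingly ordered excess vectors θ(x), θ(y) are lexicographically minimal, then x = y. (Proof via convexity: θ((x+y)/2) ≤_L θ(x) with equality forcing x = y.) -/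
/-- The vector (list) of excesses `v(S) - x(S)` over all coalitions `S ⊆ N`,
arranged in nonincreasing order. -/
noncomputable def theta {n : ℕ} (v : Finset (Fin n) → ℝ) (x : Fin n → ℝ) :
    List ℝ :=
  ((Finset.univ : Finset (Finset (Fin n))).val.map
    fun S => v S - ∑ k ∈ S, x k).sort (· ≥ ·)

/-- Lexicographic order `≤_L` on ordered excess vectors. -/
def lexLe (l₁ l₂ : List ℝ) : Prop :=
  l₁ = l₂ ∨ List.Lex (· < ·) l₁ l₂

/-!
Let `z = (x + y) / 2`. Minimality of both points gives `θ(x) = θ(y)`. The sum of the `k`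
largest entries of a vector is convex, so every prefix sum of `θ(z)` is at most the
corresponding one of `θ(x) = θ(y)`, hence `θ(z) ≤_L θ(x)`, and minimality of `x` forces
`θ(z) = θ(x)`. The three excess vectors are then rearrangements of each other and have the
same sum of squares, which by strict convexity of `t ↦ t²` is only possible if the excesses
of `x` and `y` agree; on singletons this says `x = y`.
-/

open Finset

theorem Multiset.le_map_iff {α β : Type*} {f : α → β} {s : Multiset β} {t : Multiset α} :
    s ≤ t.map f ↔ ∃ u ≤ t, u.map f = s := by
  refine ⟨fun h => ?_, fun ⟨u, hu, hmap⟩ => hmap ▸ Multiset.map_le_map hu⟩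
  induction s using Quotient.inductionOn
  induction t using Quotient.inductionOn
  obtain ⟨l, hperm, hsub⟩ := Multiset.coe_le.mp h
  obtain ⟨l', hl', rfl⟩ := List.sublist_map_iff.mp hsub
  exact ⟨l', Multiset.coe_le.mpr hl'.subperm, Multiset.coe_eq_coe.mpr hperm⟩

section SumTake

variable {α : Type*} [AddCommMonoid α] [LinearOrder α]

theorem List.sum_take_le_sum_take_cons [IsOrderedAddMonoid α] {a : α} {l : List α} {m : ℕ}
    (hm : m ≤ l.length) (ha : ∀ b ∈ l, b ≤ a) :
    (l.take m).sum ≤ ((a :: l).take m).sum := by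
  cases m with
  | zero => simp
  | succ k =>
    rw [List.sum_take_succ l k hm, List.take_succ_cons, List.sum_cons, add_comm a]
    exact add_le_add_right (ha _ (List.getElem_mem _)) _

theorem List.Sublist.sum_le_sum_take [IsOrderedAddMonoid α] {l₁ l₂ : List α}
    (h : l₁.Sublist l₂) (hl₂ : l₂.Pairwise (· ≥ ·)) :
    l₁.sum ≤ (l₂.take l₁.length).sum := by
  induction h with
  | slnil => simp
  | cons a h ih =>
    exact (ih (List.pairwise_cons.mp hl₂).2).trans
      (List.sum_take_le_sum_take_cons h.length_le (List.pairwise_cons.mp hl₂).1)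
  | cons_cons a h ih =>
    simpa using add_le_add_right (ih (List.pairwise_cons.mp hl₂).2) a

theorem Multiset.sum_le_sum_take_of_le [IsOrderedAddMonoid α] {s : Multiset α} {l : List α}
    (h : s ≤ l) (hl : l.Pairwise (· ≥ ·)) : s.sum ≤ (l.take (Multiset.card s)).sum := by
  induction s using Quotient.inductionOn with
  | h l₁ =>
    obtain ⟨l', hperm, hsub⟩ := Multiset.coe_le.mp h
    simpa [← hperm.sum_eq, ← hperm.length_eq] using hsub.sum_le_sum_take hl

theorem List.Lex.exists_sum_take_lt [IsOrderedCancelAddMonoid α] {l₁ l₂ : List α}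
    (h : List.Lex (· < ·) l₁ l₂) (hlen : l₁.length = l₂.length) :
    ∃ m, (l₁.take m).sum < (l₂.take m).sum := by
  induction h with
  | nil => simp at hlen
  | @cons a _ _ _ ih =>
    obtain ⟨m, hm⟩ := ih (by simpa using hlen)
    exact ⟨m + 1, by simpa using add_lt_add_left hm a⟩
  | rel hab => exact ⟨1, by simpa using hab⟩

theorem List.le_of_sum_take_le [IsOrderedCancelAddMonoid α] {l₁ l₂ : List α}
    (hlen : l₁.length = l₂.length) (h : ∀ m, (l₁.take m).sum ≤ (l₂.take m).sum) :
    l₁ ≤ l₂ := by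
  by_contra hlt
  obtain ⟨m, hm⟩ := List.Lex.exists_sum_take_lt (not_le.mp hlt) hlen.symm
  exact (h m).not_gt hm

end SumTake

section SortedValues

variable {ι α : Type*} [Fintype ι] [LinearOrder α]

noncomputable def sortedValues (f : ι → α) : List α :=
  ((univ : Finset ι).val.map f).sort (· ≥ ·)

theorem coe_sortedValues (f : ι → α) :
    (sortedValues f : Multiset α) = (univ : Finset ι).val.map f :=
  Multiset.sort_eq _ _

theorem length_sortedValues (f : ι → α) : (sortedValues f).length = Fintype.card ι := by
  simp [sortedValues, Multiset.length_sort]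

theorem sum_comp_eq_of_sortedValues_eq {β : Type*} [AddCommMonoid β] {f g : ι → α}
    (h : sortedValues f = sortedValues g) (φ : α → β) : ∑ i, φ (f i) = ∑ i, φ (g i) := by
  have := congrArg (fun l : List α => ((l : Multiset α).map φ).sum) h
  simpa only [coe_sortedValues, Multiset.map_map, Function.comp_def,
    ← Finset.sum_eq_multiset_sum] using this

variable [AddCommMonoid α]

theorem exists_card_eq_sum_eq_sum_take_sortedValues (f : ι → α) (k : ℕ) :
    ∃ s : Finset ι, s.card = min k (Fintype.card ι) ∧
      ∑ i ∈ s, f i = ((sortedValues f).take k).sum := by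
  have hle : ((sortedValues f).take k : Multiset α) ≤ (univ : Finset ι).val.map f := by
    rw [← coe_sortedValues]
    exact Multiset.coe_le.mpr (List.take_sublist _ _).subperm
  obtain ⟨u, hu, hmap⟩ := Multiset.le_map_iff.mp hle
  refine ⟨⟨u, Multiset.nodup_of_le hu univ.nodup⟩, ?_, ?_⟩
  · simpa [length_sortedValues] using congrArg Multiset.card hmap
  · simpa [Finset.sum_eq_multiset_sum] using congrArg Multiset.sum hmap

variable [IsOrderedAddMonoid α]

theorem sum_le_sum_take_sortedValues (f : ι → α) (s : Finset ι) :
    ∑ i ∈ s, f i ≤ ((sortedValues f).take s.card).sum := by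
  have hle : s.val.map f ≤ (sortedValues f : Multiset α) := by
    rw [coe_sortedValues]
    exact Multiset.map_le_map (Finset.val_le_iff.mpr (subset_univ s))
  simpa using Multiset.sum_le_sum_take_of_le hle (Multiset.pairwise_sort _ _)

end SortedValues

theorem sum_take_sortedValues_midpoint_le {ι : Type*} [Fintype ι] (f g : ι → ℝ) (k : ℕ) :
    ((sortedValues fun i => (f i + g i) / 2).take k).sum ≤
      (((sortedValues f).take k).sum + ((sortedValues g).take k).sum) / 2 := by
  obtain ⟨s, hcard, hs⟩ :=
    exists_card_eq_sum_eq_sum_take_sortedValues (fun i => (f i + g i) / 2) k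
  have htake (h : ι → ℝ) : (sortedValues h).take s.card = (sortedValues h).take k := by
    rw [hcard, ← length_sortedValues h, ← List.take_eq_take_min]
  have hf := sum_le_sum_take_sortedValues f s
  have hg := sum_le_sum_take_sortedValues g s
  rw [htake] at hf hg
  rw [← hs, ← Finset.sum_div, Finset.sum_add_distrib]
  linarith

theorem eq_of_sum_sq_midpoint_eq {ι : Type*} [Fintype ι] {f g : ι → ℝ}
    (hfg : ∑ i, f i ^ 2 = ∑ i, g i ^ 2) (hmid : ∑ i, ((f i + g i) / 2) ^ 2 = ∑ i, f i ^ 2) :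
    f = g := by
  have hsq : ∑ i, (f i - g i) ^ 2 = 0 := by
    have hexpand : ∀ i, (f i - g i) ^ 2 = 2 * f i ^ 2 + 2 * g i ^ 2 - 4 * ((f i + g i) / 2) ^ 2 :=
      fun i => by ring
    simp only [hexpand, Finset.sum_sub_distrib, Finset.sum_add_distrib, ← Finset.mul_sum,
      hmid, hfg]
    ring
  funext i
  have hi := (sum_eq_zero_iff_of_nonneg fun i _ => sq_nonneg (f i - g i)).mp hsq i (mem_univ i)
  exact sub_eq_zero.mp (pow_eq_zero_iff two_ne_zero |>.mp hi)

theorem lexLe_iff_le {l₁ l₂ : List ℝ} : lexLe l₁ l₂ ↔ l₁ ≤ l₂ :=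
  le_iff_eq_or_lt.symm

noncomputable def excess {n : ℕ} (v : Finset (Fin n) → ℝ) (x : Fin n → ℝ)
    (S : Finset (Fin n)) : ℝ :=
  v S - ∑ k ∈ S, x k

theorem theta_eq_sortedValues {n : ℕ} (v : Finset (Fin n) → ℝ) (x : Fin n → ℝ) :
    theta v x = sortedValues (excess v x) :=
  rfl

theorem excess_midpoint {n : ℕ} (v : Finset (Fin n) → ℝ) (x y : Fin n → ℝ) :
    excess v (fun k => (x k + y k) / 2) = fun S => (excess v x S + excess v y S) / 2 := by
  funext S
  simp only [excess, ← Finset.sum_div, Finset.sum_add_distrib]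
  ring

theorem preNucleolus_unique_general {n : ℕ} (v : Finset (Fin n) → ℝ)
    (x y : Fin n → ℝ)
    (hx : (∑ k, x k) = v Finset.univ) (hy : (∑ k, y k) = v Finset.univ)
    (hxmin : ∀ z : Fin n → ℝ, (∑ k, z k) = v Finset.univ →
      lexLe (theta v x) (theta v z))
    (hymin : ∀ z : Fin n → ℝ, (∑ k, z k) = v Finset.univ →
      lexLe (theta v y) (theta v z)) :
    x = y := by
  set z : Fin n → ℝ := fun k => (x k + y k) / 2
  have hz : (∑ k, z k) = v univ := by
    simp only [z, ← Finset.sum_div, Finset.sum_add_distrib, hx, hy]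
    ring
  have hxy : theta v x = theta v y :=
    le_antisymm (lexLe_iff_le.mp (hxmin y hy)) (lexLe_iff_le.mp (hymin x hx))
  have hzx : theta v z = theta v x := by
    refine le_antisymm (List.le_of_sum_take_le ?_ fun m => ?_) (lexLe_iff_le.mp (hxmin z hz))
    · simp only [theta_eq_sortedValues, length_sortedValues]
    · simp only [theta_eq_sortedValues, z, excess_midpoint] at hxy ⊢
      have := sum_take_sortedValues_midpoint_le (excess v x) (excess v y) m
      rw [← hxy] at this
      linarith
  rw [theta_eq_sortedValues, theta_eq_sortedValues] at hxy hzx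
  rw [excess_midpoint] at hzx
  have hexcess : excess v x = excess v y :=
    eq_of_sum_sq_midpoint_eq (sum_comp_eq_of_sortedValues_eq hxy (· ^ 2))
      (sum_comp_eq_of_sortedValues_eq hzx (· ^ 2))
  funext k
  simpa [excess] using congrFun hexcess {k}

/-- The pre-nucleolus is unique: if `x` and `y` are pre-imputations whose ordered
excess vectors are lexicographically minimal over all pre-imputations, then `x = y`. -/
theorem preNucleolus_unique {n : ℕ} (v : Finset (Fin n) → ℝ) (hv : v ∅ = 0)
    (x y : Fin n → ℝ)
    (hx : (∑ k, x k) = v Finset.univ) (hy : (∑ k, y k) = v Finset.univ)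
    (hxmin : ∀ z : Fin n → ℝ, (∑ k, z k) = v Finset.univ →
      lexLe (theta v x) (theta v z))
    (hymin : ∀ z : Fin n → ℝ, (∑ k, z k) = v Finset.univ →
      lexLe (theta v y) (theta v z)) :
    x = y :=
  preNucleolus_unique_general v x y hx hy hxmin hymin
end
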